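/- Suppose the interior of the convex hull of {P_1,…,P_N} in ℝⁿ is nonempty, and let h > 1. Define H_h : ℝⁿ → ℝⁿ by H_h(x) = (∑_{i=1}^N h^{f_i(x)} · P_i) / (∑_{i=1}^N h^{f_i(x)}). Then H_h is a real analytic map which is injective on ℝⁿ and whose range is exactly the interior of the convex hull of {P_1,…,P_N}; that is, H_h is a real analytic diffeomorphism from ℝⁿ onto the interior of conv{P_1,…,P_N}. -/

import Mathlib

open scoped RealInnerProductSpace
open Set Filter Topology

/-!
Write `t = log h`. Then `H_h(x) = M(t • x)`, where `M = ∇F` for the log-sum-exp potential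
`F(x) = log ∑ᵢ exp(⟪Pᵢ, x⟫ + t cᵢ)`: `M(x)` is the mean of the `Pᵢ` under the positive softmax
weights `exp(⟪Pᵢ, x⟫ + t cᵢ)`, so it is analytic and lies in the interior of the hull.
Moving from `y` to `y + u` multiplies the weights by `exp ⟪Pᵢ, u⟫`, an increasing function of
`bᵢ = ⟪Pᵢ, u⟫`; this strictly raises the weighted mean of the `bᵢ` (Chebyshev's sum inequality)
unless all `bᵢ` agree, which cannot happen when the `Pᵢ` affinely span and `u ≠ 0`. Hence `M` is
injective. For `p` in the interior, `F - ⟪p, ·⟫` grows at least linearly at infinity, because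
`F ≥ max (⟪Pᵢ, ·⟫ + t cᵢ)` and a ball around `p` lies in the hull; so it has a minimum, where
`M = p`.
-/

theorem sum_mul_sum_lt_sum_mul_sum_of_strictMono {ι : Type*} [Fintype ι] {p b : ι → ℝ}
    {φ : ℝ → ℝ} (hφ : StrictMono φ) (hp : ∀ k, 0 < p k) {i j : ι} (hij : b i ≠ b j) :
    (∑ k, p k * b k) * (∑ k, p k * φ (b k)) < (∑ k, p k) * ∑ k, p k * (φ (b k) * b k) := by
  have hterm : ∀ k l, 0 ≤ (b k - b l) * (φ (b k) - φ (b l)) := fun k l => by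
    rcases le_total (b k) (b l) with h | h
    · exact mul_nonneg_of_nonpos_of_nonpos (sub_nonpos.2 h) (sub_nonpos.2 (hφ.monotone h))
    · exact mul_nonneg (sub_nonneg.2 h) (sub_nonneg.2 (hφ.monotone h))
  have hterm_ij : 0 < (b i - b j) * (φ (b i) - φ (b j)) := by
    rcases hij.lt_or_gt with h | h
    · exact mul_pos_of_neg_of_neg (sub_neg.2 h) (sub_neg.2 (hφ h))
    · exact mul_pos (sub_pos.2 h) (sub_pos.2 (hφ h))
  have hpos : 0 < ∑ k, ∑ l, p k * p l * ((b k - b l) * (φ (b k) - φ (b l))) := by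
    have hnonneg : ∀ k l, 0 ≤ p k * p l * ((b k - b l) * (φ (b k) - φ (b l))) :=
      fun k l => mul_nonneg (mul_pos (hp k) (hp l)).le (hterm k l)
    refine Finset.sum_pos' (fun k _ => Finset.sum_nonneg fun l _ => hnonneg k l)
      ⟨i, Finset.mem_univ _, Finset.sum_pos' (fun l _ => hnonneg i l) ?_⟩
    exact ⟨j, Finset.mem_univ _, mul_pos (mul_pos (hp i) (hp j)) hterm_ij⟩
  -- symmetrizing `g` in `k, l` produces the summand of `hpos`
  set g : ι → ι → ℝ := fun k l => p k * (φ (b k) * b k) * p l - p k * b k * (p l * φ (b l))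
  have hsymm : ∑ k, ∑ l, p k * p l * ((b k - b l) * (φ (b k) - φ (b l)))
      = ∑ k, ∑ l, g k l + ∑ k, ∑ l, g l k := by
    rw [← Finset.sum_add_distrib]
    refine Finset.sum_congr rfl fun k _ => ?_
    rw [← Finset.sum_add_distrib]
    exact Finset.sum_congr rfl fun l _ => by simp only [g]; ring
  rw [Finset.sum_comm (f := fun k l => g l k), ← two_mul] at hsymm
  have hg : ∑ k, ∑ l, g k l
      = (∑ k, p k * (φ (b k) * b k)) * (∑ k, p k) - (∑ k, p k * b k) * ∑ k, p k * φ (b k) := by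
    simp only [g, Finset.sum_sub_distrib, Finset.sum_mul_sum]
  linarith

theorem exists_inner_ne_of_affineSpan_eq_top {ι E : Type*} [NormedAddCommGroup E]
    [InnerProductSpace ℝ E] {P : ι → E} (hP : affineSpan ℝ (range P) = ⊤) {u : E} (hu : u ≠ 0) :
    ∃ i j, ⟪P i, u⟫ ≠ ⟪P j, u⟫ := by
  by_contra! hconst
  have hker : vectorSpan ℝ (range P) ≤ LinearMap.ker (innerₛₗ ℝ u) := by
    rw [vectorSpan_def, Submodule.span_le]
    rintro _ ⟨_, ⟨i, rfl⟩, _, ⟨j, rfl⟩, rfl⟩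
    simpa [inner_sub_right, real_inner_comm u] using sub_eq_zero.2 (hconst i j)
  rw [← direction_affineSpan, hP, AffineSubspace.direction_top, top_le_iff] at hker
  exact hu (inner_self_eq_zero.1 (LinearMap.mem_ker.1 (hker ▸ Submodule.mem_top : u ∈ _)))

section ConvexHull

variable {ι E : Type*} [AddCommGroup E] [Module ℝ E]

theorem nonempty_of_mem_convexHull_range {P : ι → E} {x : E}
    (hx : x ∈ convexHull ℝ (range P)) : Nonempty ι :=
  range_nonempty_iff_nonempty.1 (convexHull_nonempty_iff.1 ⟨x, hx⟩)

variable [Fintype ι]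

theorem convexHull_range_eq_image_stdSimplex (P : ι → E) :
    convexHull ℝ (range P) = Fintype.linearCombination ℝ P '' stdSimplex ℝ ι := by
  classical
  rw [← convexHull_basis_eq_stdSimplex, LinearMap.image_convexHull, ← Set.range_comp]
  congr 2
  funext i
  simp [Fintype.linearCombination_apply]

theorem centerMass_univ_mem_interior_convexHull [TopologicalSpace E] [IsTopologicalAddGroup E]
    [ContinuousConstSMul ℝ E] {P : ι → E} (hint : (interior (convexHull ℝ (range P))).Nonempty)
    {w : ι → ℝ} (hw : ∀ i, 0 < w i) :
    Finset.univ.centerMass w P ∈ interior (convexHull ℝ (range P)) := by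
  obtain ⟨q, hq⟩ := hint
  have := nonempty_of_mem_convexHull_range (interior_subset hq)
  obtain ⟨μ, ⟨hμ0, hμ1⟩, rfl⟩ :=
    (convexHull_range_eq_image_stdSimplex P).subset (interior_subset hq)
  -- write the center of mass as `(s / W) • q + ((W - s) / W) • a` with `a` in the hull
  obtain ⟨k, -, hk⟩ := Finset.univ.exists_min_image w Finset.univ_nonempty
  set s := w k / 2
  set W := ∑ i, w i
  have hs : 0 < s := half_pos (hw k)
  have hμle : ∀ i, μ i ≤ 1 := fun i =>
    hμ1 ▸ Finset.single_le_sum (fun j _ => hμ0 j) (Finset.mem_univ i)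
  have hν : ∀ i, 0 < w i - s * μ i := fun i => by
    have hsk : s < w k := half_lt_self (hw k)
    linarith [hk i (Finset.mem_univ i), mul_le_of_le_one_right hs.le (hμle i)]
  have hνsum : ∑ i, (w i - s * μ i) = W - s := by
    rw [Finset.sum_sub_distrib, ← Finset.mul_sum, hμ1, mul_one]
  have hWs : 0 < W - s := hνsum ▸ Finset.sum_pos (fun i _ => hν i) Finset.univ_nonempty
  have hW : 0 < W := by linarith
  have hsplit : Finset.univ.centerMass w P = (s / W) • Fintype.linearCombination ℝ P μ
      + ((W - s) / W) • Finset.univ.centerMass (fun i => w i - s * μ i) P := by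
    have hcoef : (W - s) / W * (W - s)⁻¹ = W⁻¹ := by field_simp
    simp only [Finset.centerMass, hνsum, Fintype.linearCombination_apply, sub_smul,
      Finset.sum_sub_distrib, mul_smul, ← Finset.smul_sum]
    rw [smul_smul, hcoef]
    module
  rw [hsplit]
  refine (convex_convexHull ℝ _).combo_interior_self_mem_interior hq
    (Finset.univ.centerMass_mem_convexHull (fun i _ => (hν i).le) (hνsum ▸ hWs)
      fun i _ => mem_range_self i) (div_pos hs hW) (div_nonneg hWs.le hW.le) ?_
  field_simp
  ring

end ConvexHull

theorem exists_inner_add_mul_norm_le_of_closedBall_subset_convexHull {ι E : Type*}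
    [NormedAddCommGroup E] [InnerProductSpace ℝ E] {P : ι → E} {p : E} {r : ℝ} (hr : 0 ≤ r)
    (hball : Metric.closedBall p r ⊆ convexHull ℝ (range P)) (z : E) :
    ∃ i, ⟪p, z⟫ + r * ‖z‖ ≤ ⟪P i, z⟫ := by
  have hq : p + (r / ‖z‖) • z ∈ Metric.closedBall p r := by
    rw [Metric.mem_closedBall, dist_eq_norm, add_sub_cancel_left, norm_smul, Real.norm_eq_abs,
      abs_of_nonneg (by positivity)]
    rcases eq_or_ne ‖z‖ 0 with hz | hz
    · simp [hz, hr]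
    · rw [div_mul_cancel₀ _ hz]
  obtain ⟨_, ⟨i, rfl⟩, hi⟩ := ((innerₛₗ ℝ z).convexOn convex_univ).exists_ge_of_mem_convexHull
    (subset_univ _) (hball hq)
  refine ⟨i, ?_⟩
  have hqz : ⟪p + (r / ‖z‖) • z, z⟫ = ⟪p, z⟫ + r * ‖z‖ := by
    rw [inner_add_left, real_inner_smul_left, real_inner_self_eq_norm_sq]
    rcases eq_or_ne ‖z‖ 0 with hz | hz
    · simp [hz]
    · field_simp
  rwa [innerₛₗ_apply_apply, innerₛₗ_apply_apply, ← real_inner_comm z (P i), ← real_inner_comm z,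
    hqz] at hi

section Softmax

variable {ι E : Type*} [Fintype ι] [NormedAddCommGroup E] [InnerProductSpace ℝ E]

noncomputable def logSumExp (P : ι → E) (c : ι → ℝ) (x : E) : ℝ :=
  Real.log (∑ i, Real.exp (⟪P i, x⟫ + c i))

noncomputable def softmaxMean (P : ι → E) (c : ι → ℝ) (x : E) : E :=
  Finset.univ.centerMass (fun i => Real.exp (⟪P i, x⟫ + c i)) P

variable (P : ι → E) (c : ι → ℝ)

theorem add_le_logSumExp (i : ι) (x : E) : ⟪P i, x⟫ + c i ≤ logSumExp P c x :=
  (Real.le_log_iff_exp_le (Finset.sum_pos (fun _ _ => Real.exp_pos _) ⟨i, Finset.mem_univ i⟩)).2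
    (Finset.single_le_sum (f := fun j => Real.exp (⟪P j, x⟫ + c j))
      (fun _ _ => (Real.exp_pos _).le) (Finset.mem_univ i))

theorem hasFDerivAt_logSumExp [Nonempty ι] (x : E) :
    HasFDerivAt (logSumExp P c) (innerSL ℝ (softmaxMean P c x)) x := by
  have hsum : HasFDerivAt (fun y => ∑ i, Real.exp (⟪P i, y⟫ + c i))
      (∑ i, Real.exp (⟪P i, x⟫ + c i) • innerSL ℝ (P i)) x :=
    HasFDerivAt.fun_sum fun i _ => ((innerSL ℝ (P i)).hasFDerivAt.add_const (c i)).exp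
  refine (hsum.log (by positivity)).congr_fderiv ?_
  simp [softmaxMean, Finset.centerMass]

theorem analyticAt_softmaxMean [Nonempty ι] (x : E) : AnalyticAt ℝ (softmaxMean P c) x := by
  have hw : ∀ i, AnalyticAt ℝ (fun y => Real.exp (⟪P i, y⟫ + c i)) x := fun i =>
    (((innerSL ℝ (P i)).analyticAt x).add analyticAt_const).rexp
  exact ((Finset.analyticAt_fun_sum _ fun i _ => hw i).inv (by positivity)).smul
    (Finset.analyticAt_fun_sum _ fun i _ => (hw i).smul analyticAt_const)

theorem softmaxMean_mem_interior_convexHull (hint : (interior (convexHull ℝ (range P))).Nonempty)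
    (x : E) : softmaxMean P c x ∈ interior (convexHull ℝ (range P)) :=
  centerMass_univ_mem_interior_convexHull hint fun _ => Real.exp_pos _

theorem inner_softmaxMean (x u : E) :
    ⟪softmaxMean P c x, u⟫ = (∑ i, Real.exp (⟪P i, x⟫ + c i))⁻¹ *
      ∑ i, Real.exp (⟪P i, x⟫ + c i) * ⟪P i, u⟫ := by
  simp [softmaxMean, Finset.centerMass, real_inner_smul_left, sum_inner]

theorem inner_softmaxMean_lt_inner_softmaxMean_add (hP : affineSpan ℝ (range P) = ⊤) (y : E)
    {u : E} (hu : u ≠ 0) : ⟪softmaxMean P c y, u⟫ < ⟪softmaxMean P c (y + u), u⟫ := by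
  obtain ⟨i, j, hij⟩ := exists_inner_ne_of_affineSpan_eq_top hP hu
  have hcheb := sum_mul_sum_lt_sum_mul_sum_of_strictMono (b := fun k => ⟪P k, u⟫)
    Real.exp_strictMono (fun k => Real.exp_pos (⟪P k, y⟫ + c k)) hij
  have htilt : ∀ k, Real.exp (⟪P k, y + u⟫ + c k)
      = Real.exp (⟪P k, y⟫ + c k) * Real.exp ⟪P k, u⟫ := fun k => by
    rw [← Real.exp_add, inner_add_right]; ring_nf
  have hpos : ∀ z, 0 < ∑ k, Real.exp (⟪P k, z⟫ + c k) := fun z =>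
    Finset.sum_pos (fun k _ => Real.exp_pos _) ⟨i, Finset.mem_univ i⟩
  rw [inner_softmaxMean, inner_softmaxMean, inv_mul_eq_div, inv_mul_eq_div,
    div_lt_div_iff₀ (hpos y) (hpos (y + u))]
  simp only [htilt, mul_assoc]
  linarith

theorem softmaxMean_injective (hP : affineSpan ℝ (range P) = ⊤) :
    Function.Injective (softmaxMean P c) := by
  intro x y hxy
  by_contra hne
  have := inner_softmaxMean_lt_inner_softmaxMean_add P c hP y (sub_ne_zero.2 hne)
  rw [add_sub_cancel, hxy] at this
  exact this.false

theorem tendsto_logSumExp_sub_inner_cocompact [ProperSpace E] {p : E}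
    (hp : p ∈ interior (convexHull ℝ (range P))) :
    Tendsto (fun x => logSumExp P c x - ⟪p, x⟫) (cocompact E) atTop := by
  obtain ⟨r, hr, hball⟩ := Metric.nhds_basis_closedBall.mem_iff.1 (mem_interior_iff_mem_nhds.1 hp)
  refine tendsto_atTop_mono (fun x => ?_) <|
    tendsto_atTop_add_const_right _ (⨅ i, c i) (tendsto_norm_cocompact_atTop.const_mul_atTop hr)
  obtain ⟨i, hi⟩ := exists_inner_add_mul_norm_le_of_closedBall_subset_convexHull hr.le hball x
  linarith [add_le_logSumExp P c i x, ciInf_le (Finite.bddBelow_range c) i]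

theorem exists_softmaxMean_eq [ProperSpace E] {p : E}
    (hp : p ∈ interior (convexHull ℝ (range P))) : ∃ x, softmaxMean P c x = p := by
  have := nonempty_of_mem_convexHull_range (interior_subset hp)
  have hderiv : ∀ x, HasFDerivAt (fun x => logSumExp P c x - ⟪p, x⟫)
      (innerSL ℝ (softmaxMean P c x) - innerSL ℝ p) x :=
    fun x => (hasFDerivAt_logSumExp P c x).sub (innerSL ℝ p).hasFDerivAt
  obtain ⟨x, hmin⟩ := (continuous_iff_continuousAt.2 fun x => (hderiv x).continuousAt)
    |>.exists_forall_le (tendsto_logSumExp_sub_inner_cocompact P c hp)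
  have hcrit := IsLocalMin.hasFDerivAt_eq_zero (Eventually.of_forall hmin) (hderiv x)
  refine ⟨x, ext_inner_right ℝ fun v => sub_eq_zero.1 ?_⟩
  simpa using DFunLike.congr_fun hcrit v

theorem range_softmaxMean [ProperSpace E] (hint : (interior (convexHull ℝ (range P))).Nonempty) :
    range (softmaxMean P c) = interior (convexHull ℝ (range P)) :=
  (range_subset_iff.2 (softmaxMean_mem_interior_convexHull P c hint)).antisymm
    fun _ hp => exists_softmaxMean_eq P c hp

end Softmax

theorem moment_map_analytic_diffeo_onto_interior_general
    (n N : ℕ)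
    (P : Fin N → EuclideanSpace ℝ (Fin n))
    (c : Fin N → ℝ)
    (f : Fin N → EuclideanSpace ℝ (Fin n) → ℝ)
    (hf : ∀ i x, f i x = ⟪x, P i⟫ + c i)
    (hint : (interior (convexHull ℝ (Set.range P))).Nonempty)
    (h : ℝ) (hh : 1 < h)
    (H : EuclideanSpace ℝ (Fin n) → EuclideanSpace ℝ (Fin n))
    (hH : ∀ x, H x = (∑ i, h ^ (f i x))⁻¹ • ∑ i, h ^ (f i x) • P i) :
    (∀ x, AnalyticAt ℝ H x) ∧ Function.Injective H ∧
      Set.range H = interior (convexHull ℝ (Set.range P)) := by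
  have hlog : Real.log h ≠ 0 := (Real.log_pos hh).ne'
  have hH_softmax : H = softmaxMean P (fun i => Real.log h * c i) ∘ (Real.log h • ·) := by
    funext x
    have hweight : ∀ i, h ^ f i x = Real.exp (⟪P i, Real.log h • x⟫ + Real.log h * c i) := by
      intro i
      rw [hf, Real.rpow_def_of_pos (by linarith), real_inner_smul_right, real_inner_comm, mul_add]
    simp only [hH, hweight, Function.comp_apply, softmaxMean, Finset.centerMass]
  have := nonempty_of_mem_convexHull_range (interior_subset hint.some_mem)
  rw [hH_softmax]
  refine ⟨fun x => ?_, ?_, ?_⟩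
  · exact (analyticAt_softmaxMean _ _ _).comp (by fun_prop)
  · exact (softmaxMean_injective _ _ (affineSpan_eq_top_of_nonempty_interior hint)).comp
      (smul_right_injective _ hlog)
  · rw [Function.Surjective.range_comp (fun y => ⟨(Real.log h)⁻¹ • y, smul_inv_smul₀ hlog y⟩)]
    exact range_softmaxMean _ _ hint

/-- if the convex hull of the `P_i` has nonempty interior and
`h > 1`, then the normalized exponential gradient map
`H_h(x) = (∑ h^{f_i(x)} P_i)/(∑ h^{f_i(x)})` is a real analytic diffeomorphism
from `ℝⁿ` onto the interior of the convex hull: it is analytic, injective, and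
its range is exactly the interior of `conv{P_1,…,P_N}`. -/
theorem moment_map_analytic_diffeo_onto_interior
    (n N : ℕ) (hN : 1 ≤ N)
    (P : Fin N → EuclideanSpace ℝ (Fin n)) (w : Fin N → ℝ)
    (c : Fin N → ℝ) (hc : ∀ i, c i = -((‖P i‖ ^ 2 - w i) / 2))
    (f : Fin N → EuclideanSpace ℝ (Fin n) → ℝ)
    (hf : ∀ i x, f i x = ⟪x, P i⟫ + c i)
    (hint : (interior (convexHull ℝ (Set.range P))).Nonempty)
    (h : ℝ) (hh : 1 < h)
    (H : EuclideanSpace ℝ (Fin n) → EuclideanSpace ℝ (Fin n))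
    (hH : ∀ x, H x = (∑ i, h ^ (f i x))⁻¹ • ∑ i, h ^ (f i x) • P i) :
    (∀ x, AnalyticAt ℝ H x) ∧ Function.Injective H ∧
      Set.range H = interior (convexHull ℝ (Set.range P)) :=
  moment_map_analytic_diffeo_onto_interior_general n N P c f hf hint h hh H hH
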